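/- Every 3-colorable simple graph admits a semi-transitive orientation: orienting each edge from the vertex with smaller color class index to the vertex with larger color class index yields a semi-transitive orientation. -/

import Mathlib

/-!
Colours strictly increase along directed edges, so the orientation is acyclic and a directed
path visits at most three colours, i.e. has at most two edges. In such a path every pair of
vertices is either consecutive or the pair of endpoints, so a shortcut edge between the
endpoints already supplies all edges that semi-transitivity demands.
-/

/-- `o` is an orientation of the simple graph `G`: each edge gets exactly one direction. -/
def IsOrientation {V : Type*} (G : SimpleGraph V) (o : V → V → Prop) : Prop :=
  (∀ u v, o u v → G.Adj u v) ∧ (∀ u v, G.Adj u v → (o u v ∨ o v u)) ∧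
    (∀ u v, o u v → ¬ o v u)

/-- An orientation (relation) is acyclic if there is no directed cycle. -/
def IsAcyclic {V : Type*} (o : V → V → Prop) : Prop :=
  Irreflexive (Relation.TransGen o)

/-- Semi-transitive: acyclic, and every directed path `u₁ → ⋯ → u_{t+1}` together with a
shortcut edge `u₁ → u_{t+1}` forces all edges `u_i → u_j` for `i < j`. -/
def SemiTransitive {V : Type*} (o : V → V → Prop) : Prop :=
  IsAcyclic o ∧ ∀ (t : ℕ) (f : Fin (t + 1) → V),
    (∀ i : Fin t, o (f i.castSucc) (f i.succ)) →
    o (f 0) (f (Fin.last t)) →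
    ∀ i j : Fin (t + 1), i < j → o (f i) (f j)

/-- The wheel graph `W_n`: cycle `C_n` plus a hub (`none`) adjacent to all rim vertices. -/
def wheelGraph (n : ℕ) : SimpleGraph (Option (Fin n)) where
  Adj x y :=
    match x, y with
    | none, none => False
    | none, some _ => True
    | some _, none => True
    | some i, some j => (SimpleGraph.cycleGraph n).Adj i j
  symm := by
    constructor
    intro x y h
    match x, y with
    | none, some _ => trivial
    | some _, none => trivial
    | some i, some j => exact ((SimpleGraph.cycleGraph n).symm.symm _ _ h)
  loopless := by
    constructor
    intro x
    match x with
    | none => exact fun h => h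
    | some i => exact fun h => (SimpleGraph.cycleGraph n).loopless.irrefl i h

/-- Two letters alternate in a word: the restriction of the word to their occurrences has
no two equal consecutive letters. -/
def Alternate {V : Type*} [DecidableEq V] (w : List V) (x y : V) : Prop :=
  (w.filter fun z => decide (z = x ∨ z = y)).Chain' (· ≠ ·)

/-- A word `w` represents a graph `G`: every vertex occurs in `w`, and two distinct
vertices alternate in `w` iff they are adjacent in `G`. -/
def Represents {V : Type*} [DecidableEq V] (w : List V) (G : SimpleGraph V) : Prop :=
  (∀ v : V, v ∈ w) ∧ ∀ x y : V, x ≠ y → (Alternate w x y ↔ G.Adj x y)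

/-- A comparability graph: admits a transitive orientation. -/
def IsComparabilityGraph {V : Type*} (G : SimpleGraph V) : Prop :=
  ∃ o : V → V → Prop, IsOrientation G o ∧ Transitive o

/-- Abstract combinatorial structure of a near-triangulation: a graph together with a
set of inner vertices such that the neighborhood of every inner vertex induces a cycle
of length equal to its degree. (Planarity is not available in Mathlib, so a
near-triangulation is abstracted by this key structural property.) -/
def IsNearTriangulation {V : Type*} [Fintype V] (G : SimpleGraph V) [DecidableRel G.Adj]
    (inner : Set V) : Prop :=
  ∀ v ∈ inner, 3 ≤ G.degree v ∧
    Nonempty ((G.induce (G.neighborSet v)) ≃g SimpleGraph.cycleGraph (G.degree v))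

/-- `G` contains an induced copy of `H`. -/
def HasInducedCopy {V W : Type*} (G : SimpleGraph V) (H : SimpleGraph W) : Prop :=
  ∃ s : Set V, Nonempty ((G.induce s) ≃g H)

theorem SimpleGraph.Coloring.isOrientation_adj_lt {V α : Type*} [LinearOrder α]
    {G : SimpleGraph V} (c : G.Coloring α) :
    IsOrientation G (fun u v => G.Adj u v ∧ c u < c v) := by
  refine ⟨fun _ _ h => h.1, fun u v huv => ?_, fun _ _ huv hvu => lt_asymm huv.2 hvu.2⟩
  rcases (c.valid huv).lt_or_gt with hlt | hgt
  · exact .inl ⟨huv, hlt⟩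
  · exact .inr ⟨huv.symm, hgt⟩

section Rank

variable {V α : Type*} {o : V → V → Prop}

theorem isAcyclic_of_rank [Preorder α] (r : V → α) (hr : ∀ u v, o u v → r u < r v) :
    IsAcyclic o := by
  intro v hv
  have hlt : Relation.TransGen (· < ·) (r v) (r v) := hv.lift r hr
  rw [Relation.transGen_eq_self] at hlt
  exact lt_irrefl _ hlt

theorem card_le_of_path_of_rank [Preorder α] [Fintype α] (r : V → α)
    (hr : ∀ u v, o u v → r u < r v) {t : ℕ} {f : Fin (t + 1) → V}
    (hpath : ∀ i : Fin t, o (f i.castSucc) (f i.succ)) : t + 1 ≤ Fintype.card α := by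
  have hmono : StrictMono (r ∘ f) :=
    Fin.strictMono_iff_lt_succ.mpr fun i => hr _ _ (hpath i)
  simpa using Fintype.card_le_of_injective _ hmono.injective

theorem rel_of_path_of_rel_endpoints {t : ℕ} (ht : t ≤ 2) {f : Fin (t + 1) → V}
    (hpath : ∀ i : Fin t, o (f i.castSucc) (f i.succ)) (hshort : o (f 0) (f (Fin.last t)))
    {i j : Fin (t + 1)} (hij : i < j) : o (f i) (f j) := by
  rw [Fin.lt_def] at hij
  by_cases hconsec : (j : ℕ) = i + 1
  · convert hpath ⟨i, by omega⟩ using 2 <;> ext <;> simp [hconsec]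
  · obtain rfl : i = 0 := by ext; simp only [Fin.val_zero]; omega
    obtain rfl : j = Fin.last t := by ext; simp only [Fin.val_last]; omega
    exact hshort

theorem semiTransitive_of_rank [Preorder α] [Fintype α] (hα : Fintype.card α ≤ 3)
    (r : V → α) (hr : ∀ u v, o u v → r u < r v) : SemiTransitive o := by
  refine ⟨isAcyclic_of_rank r hr, fun t f hpath hshort _ _ hij => ?_⟩
  have ht := card_le_of_path_of_rank r hr hpath
  exact rel_of_path_of_rel_endpoints (by omega) hpath hshort hij

end Rank

/-- every 3-colorable graph admits a semi-transitive orientation; indeed,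
orienting every edge from the smaller color to the larger color is semi-transitive. -/
theorem threeColorable_semiTransitive {V : Type*} (G : SimpleGraph V)
    (c : G.Coloring (Fin 3)) :
    IsOrientation G (fun u v => G.Adj u v ∧ c u < c v) ∧
      SemiTransitive (fun u v => G.Adj u v ∧ c u < c v) :=
  ⟨c.isOrientation_adj_lt, semiTransitive_of_rank (by simp) c fun _ _ h => h.2⟩
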